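/- arXiv:1801.08709 — 8 statements merged into one kernel-verified Lean document; each statement's English description precedes it below -/
import Mathlib

section
/- Let S be a finite set of binary strings of length k, and build a graph G on vertex set S by choosing, for each index j that is cut by some pair in S, one edge {x,y} where the pair (x,y) cuts j (with distinct indices giving distinct chosen edges). Then G is acyclic. -/
/-!
Suppose `G` has a cycle and let `j` be the least index cut by an edge of the cycle. Colour each
vertex by whether it agrees at `j` with a fixed endpoint of the (unique) edge cutting `j`. An edge
cutting a larger index agrees at `j`, so the edge cutting `j` is the only edge of the cycle whose
endpoints get different colours. A closed walk changes colour an even number of times, while a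
cycle traverses that edge exactly once.
-/

namespace SimpleGraph

variable {V : Type*} {G : SimpleGraph V}

namespace Walk

theorem even_countP_darts_bne_iff (b : V → Bool) {u v : V} (p : G.Walk u v) :
    Even (p.darts.countP fun d => b d.fst != b d.snd) ↔ b u = b v := by
  induction p with
  | nil => simp
  | @cons u w v _ p ih =>
    rw [darts_cons, List.countP_cons, Nat.even_add, ih]
    cases b u <;> cases b w <;> cases b v <;> simp

theorem IsTrail.exists_dart_bne_edge_ne {u : V} {p : G.Walk u u} (hp : p.IsTrail) (b : V → Bool)
    {d₀ : G.Dart} (hd₀ : d₀ ∈ p.darts) (hb : b d₀.fst ≠ b d₀.snd) :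
    ∃ d ∈ p.darts, b d.fst ≠ b d.snd ∧ d.edge ≠ d₀.edge := by
  classical
  by_contra! h
  have hcount : (p.darts.countP fun d => b d.fst != b d.snd) = p.edges.count d₀.edge := by
    rw [edges, List.count_eq_countP, List.countP_map]
    refine List.countP_congr fun d hd => ?_
    simp only [Function.comp_apply, bne_iff_ne, ne_eq, beq_iff_eq]
    refine ⟨h d hd, fun hde => ?_⟩
    rcases (dart_edge_eq_iff d d₀).mp hde with rfl | rfl
    · exact hb
    · exact fun h' => hb h'.symm
  have heven := (even_countP_darts_bne_iff b p).mpr rfl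
  rw [hcount, hp.count_edges_eq_one (List.mem_map_of_mem hd₀)] at heven
  exact Nat.not_even_one heven

end Walk

end SimpleGraph

section Cuts

variable {V β : Type*}

def CutsAt (w : V → ℕ → β) (j : ℕ) (x y : V) : Prop :=
  (∀ i < j, w x i = w y i) ∧ w x j ≠ w y j

variable {w : V → ℕ → β} {j j' : ℕ} {x y : V}

theorem CutsAt.symm (h : CutsAt w j x y) : CutsAt w j y x :=
  ⟨fun i hi => (h.1 i hi).symm, h.2.symm⟩

theorem CutsAt.eq (h : CutsAt w j x y) (h' : CutsAt w j' x y) : j = j' := by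
  by_contra hne
  rcases Nat.lt_or_gt_of_ne hne with hlt | hlt
  · exact h.2 (h'.1 j hlt)
  · exact h'.2 (h.1 j' hlt)

theorem SimpleGraph.isAcyclic_of_unique_edge_cutsAt {G : SimpleGraph V} (w : V → ℕ → β)
    (hcut : ∀ x y, G.Adj x y → ∃ j, CutsAt w j x y)
    (hunique : ∀ j x y x' y', G.Adj x y → G.Adj x' y' →
      CutsAt w j x y → CutsAt w j x' y' → s(x, y) = s(x', y')) :
    G.IsAcyclic := by
  classical
  intro v p hp
  have hcut_cycle : ∃ j, ∃ d ∈ p.darts, CutsAt w j d.fst d.snd := by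
    obtain ⟨d, hd⟩ := List.exists_mem_of_ne_nil _ (mt Walk.darts_eq_nil.mp hp.not_nil)
    obtain ⟨j, hj⟩ := hcut _ _ d.adj
    exact ⟨j, d, hd, hj⟩
  set j := Nat.find hcut_cycle
  obtain ⟨d₀, hd₀, hcut₀⟩ := Nat.find_spec hcut_cycle
  let b : V → Bool := fun x => decide (w x j = w d₀.fst j)
  have hb₀ : b d₀.fst ≠ b d₀.snd := by simpa [b] using hcut₀.2.symm
  obtain ⟨d, hd, hbd, hde⟩ := hp.isTrail.exists_dart_bne_edge_ne b hd₀ hb₀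
  obtain ⟨j', hj'⟩ := hcut _ _ d.adj
  have hdj : w d.fst j ≠ w d.snd j := fun h => hbd (by simp only [b, h])
  have hcut_d : CutsAt w j d.fst d.snd :=
    ⟨fun i hi => hj'.1 i (hi.trans_le (Nat.find_min' hcut_cycle ⟨d, hd, hj'⟩)), hdj⟩
  exact hde (hunique j _ _ _ _ d.adj d₀.adj hcut_d hcut₀)

end Cuts

theorem stmt1_general (k : ℕ) (S : Set ℕ)
    (J : Set ℕ)
    (e : ℕ → ℕ × ℕ)
    (he : ∀ j ∈ J, (e j).1 ∈ S ∧ (e j).2 ∈ S ∧ (e j).1 ≠ (e j).2 ∧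
      (∀ i < j, ((e j).1).testBit (k - 1 - i) = ((e j).2).testBit (k - 1 - i)) ∧
      ((e j).1).testBit (k - 1 - j) ≠ ((e j).2).testBit (k - 1 - j))
    (G : SimpleGraph ℕ)
    (hG : ∀ x y, G.Adj x y ↔ x ≠ y ∧ ∃ j ∈ J, ({(e j).1, (e j).2} : Set ℕ) = {x, y}) :
    G.IsAcyclic := by
  let w : ℕ → ℕ → Bool := fun x i => x.testBit (k - 1 - i)
  have hedge : ∀ x y, G.Adj x y → ∃ j, CutsAt w j x y ∧ s(x, y) = s((e j).1, (e j).2) := by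
    intro x y hxy
    obtain ⟨-, j, hj, hpair⟩ := (hG x y).mp hxy
    have hcut : CutsAt w j (e j).1 (e j).2 := (he j hj).2.2.2
    rcases Set.pair_eq_pair_iff.mp hpair with ⟨rfl, rfl⟩ | ⟨rfl, rfl⟩
    · exact ⟨j, hcut, rfl⟩
    · exact ⟨j, hcut.symm, Sym2.eq_swap⟩
  refine SimpleGraph.isAcyclic_of_unique_edge_cutsAt w
    (fun x y hxy => (hedge x y hxy).imp fun _ => And.left) ?_
  intro j x y x' y' hxy hxy' hcut hcut'
  obtain ⟨j₁, hcut₁, hxy_eq⟩ := hedge x y hxy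
  obtain ⟨j₂, hcut₂, hxy'_eq⟩ := hedge x' y' hxy'
  rw [hxy_eq, hxy'_eq, hcut₁.eq hcut, hcut₂.eq hcut']

/-- Build a graph `G` on a set `S` of binary strings of length `k` (encoded as
numbers below `2^k`, bit `i` of `x` being `x.testBit (k-1-i)`) by choosing, for
each index `j ∈ J` cut by some pair of `S`, one edge `{(e j).1, (e j).2}` where
the chosen pair cuts `j` (agrees on bits below `j` and differs in bit `j`),
distinct indices giving distinct chosen edges.  Then `G` is acyclic. -/
theorem stmt1 (k : ℕ) (S : Set ℕ) (hS : ∀ x ∈ S, x < 2 ^ k)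
    (J : Set ℕ) (hJ : ∀ j ∈ J, j < k)
    (e : ℕ → ℕ × ℕ)
    (he : ∀ j ∈ J, (e j).1 ∈ S ∧ (e j).2 ∈ S ∧ (e j).1 ≠ (e j).2 ∧
      (∀ i < j, ((e j).1).testBit (k - 1 - i) = ((e j).2).testBit (k - 1 - i)) ∧
      ((e j).1).testBit (k - 1 - j) ≠ ((e j).2).testBit (k - 1 - j))
    (hinj : ∀ j ∈ J, ∀ j' ∈ J,
      ({(e j).1, (e j).2} : Set ℕ) = {(e j').1, (e j').2} → j = j')
    (G : SimpleGraph ℕ)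
    (hG : ∀ x y, G.Adj x y ↔ x ≠ y ∧ ∃ j ∈ J, ({(e j).1, (e j).2} : Set ℕ) = {x, y}) :
    G.IsAcyclic :=
  stmt1_general k S J e he G hG
end

section
/- If f : [n] → ℕ is ε-far from monotone and t = ⌊εn/2⌋, then there exist pairwise disjoint pairs (x_1,y_1),...,(x_t,y_t) with x_i < y_i, f(x_i) > f(y_i), and y_i − x_i ≤ εn for all i. -/
/-!
Take a maximal family `P` of pairwise disjoint short descents `(a, b)` (with `a < b < n`,
`f b < f a`, `b - a ≤ εn`) and let `S` be the set of their endpoints. If `|S| + 1 ≤ εn`, then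
`f` is monotone on `[n] \ S`: a descent of `f` on `[n] \ S` yields one between neighbours of
`[n] \ S`, whose gap is at most `|S| + 1 ≤ εn`, so it would extend `P`. Extending `f` from
`[n] \ S` to a monotone function changes `f` only on `S`, so farness forces `εn ≤ |S|`, absurd.
Hence `εn < |S| + 1 ≤ 2|P| + 1`, which gives `⌊εn/2⌋ ≤ |P|`.
-/

open Finset

lemma exists_adjacent_descent {β : Type*} [LinearOrder β] {C : Finset ℕ} {f : ℕ → β}
    {x y : ℕ} (hx : x ∈ C) (hy : y ∈ C) (hxy : x < y) (hf : f y < f x) :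
    ∃ a ∈ C, ∃ b ∈ C, a < b ∧ f b < f a ∧ ∀ c ∈ C, c ∉ Set.Ioo a b := by
  classical
  let D := (C ×ˢ C).filter fun p => p.1 < p.2 ∧ f p.2 < f p.1
  have hD : (x, y) ∈ D := by simp [D, hx, hy, hxy, hf]
  -- A descent of minimal length has no point of `C` in between: it would split it.
  obtain ⟨⟨a, b⟩, hab, hmin⟩ := D.exists_min_image (fun p => p.2 - p.1) ⟨_, hD⟩
  simp only [D, mem_filter, mem_product] at hab hmin
  obtain ⟨⟨ha, hb⟩, hlt, hfab⟩ := hab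
  refine ⟨a, ha, b, hb, hlt, hfab, fun c hc ⟨hac, hcb⟩ => ?_⟩
  rcases lt_or_ge (f c) (f a) with hfc | hfc
  · have := hmin (a, c) ⟨⟨ha, hc⟩, hac, hfc⟩
    dsimp only at this
    omega
  · have := hmin (c, b) ⟨⟨hc, hb⟩, hcb, hfab.trans_le hfc⟩
    dsimp only at this
    omega

def FarFromMonotone (n : ℕ) (r : ℝ) (f : ℕ → ℕ) : Prop :=
  ∀ g : ℕ → ℕ, (∀ x y, x ≤ y → y < n → g x ≤ g y) →
    r ≤ ((range n).filter (fun x => f x ≠ g x)).card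

def IsShortDescent (n : ℕ) (r : ℝ) (f : ℕ → ℕ) (p : ℕ × ℕ) : Prop :=
  p.1 < p.2 ∧ p.2 < n ∧ f p.2 < f p.1 ∧ ((p.2 : ℝ) - p.1) ≤ r

def pairPoints (p : ℕ × ℕ) : Finset ℕ := {p.1, p.2}

def IsShortDescentMatching (n : ℕ) (r : ℝ) (f : ℕ → ℕ) (P : Finset (ℕ × ℕ)) : Prop :=
  (∀ p ∈ P, IsShortDescent n r f p) ∧ (P : Set (ℕ × ℕ)).PairwiseDisjoint pairPoints

lemma card_biUnion_pairPoints_le (P : Finset (ℕ × ℕ)) :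
    (P.biUnion pairPoints).card ≤ 2 * P.card :=
  calc (P.biUnion pairPoints).card ≤ ∑ p ∈ P, (pairPoints p).card := card_biUnion_le
    _ ≤ ∑ _p ∈ P, 2 := sum_le_sum fun _ _ => card_le_two
    _ = 2 * P.card := by rw [sum_const, smul_eq_mul, mul_comm]

section

variable {n : ℕ} {r : ℝ} {f : ℕ → ℕ}

lemma monotoneOn_range_sdiff_of_forall_not_isShortDescent {S : Finset ℕ}
    (hS : (S.card : ℝ) + 1 ≤ r)
    (hfree : ∀ a ∉ S, ∀ b ∉ S, ¬ IsShortDescent n r f (a, b)) :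
    MonotoneOn f ↑(range n \ S) := by
  intro x hx y hy hxy
  by_contra! hf
  obtain ⟨a, ha, b, hb, hab, hfab, hgap⟩ :=
    exists_adjacent_descent hx hy (hxy.lt_of_ne (by rintro rfl; exact hf.false)) hf
  rw [mem_sdiff, mem_range] at ha hb
  have hIoo : Ioo a b ⊆ S := fun c hc => by
    rw [mem_Ioo] at hc
    by_contra hcS
    exact hgap c (mem_sdiff.2 ⟨mem_range.2 (by omega), hcS⟩) hc
  have hlen : b - a ≤ S.card + 1 := by
    have := card_le_card hIoo
    rw [Nat.card_Ioo] at this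
    omega
  refine hfree a ha.2 b hb.2 ⟨hab, hb.1, hfab, ?_⟩
  calc ((b : ℝ) - a) = ((b - a : ℕ) : ℝ) := by push_cast [hab.le]; ring
    _ ≤ S.card + 1 := by exact_mod_cast hlen
    _ ≤ r := hS

lemma FarFromMonotone.le_card_of_monotoneOn_range_sdiff (hfar : FarFromMonotone n r f)
    {S : Finset ℕ} (hmono : MonotoneOn f ↑(range n \ S)) : r ≤ S.card := by
  obtain ⟨g, hg, hfg⟩ := hmono.exists_monotone_extension
    (Set.Finite.bddBelow (finite_toSet _ |>.image f))
    (Set.Finite.bddAbove (finite_toSet _ |>.image f))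
  refine (hfar g fun x y hxy _ => hg hxy).trans (Nat.cast_le.2 (card_le_card fun x hx => ?_))
  rw [mem_filter] at hx
  by_contra hxS
  exact hx.2 (hfg (mem_sdiff.2 ⟨hx.1, hxS⟩))

lemma FarFromMonotone.lt_card_add_one (hfar : FarFromMonotone n r f) {S : Finset ℕ}
    (hfree : ∀ a ∉ S, ∀ b ∉ S, ¬ IsShortDescent n r f (a, b)) : r < S.card + 1 := by
  by_contra! hS
  have := hfar.le_card_of_monotoneOn_range_sdiff
    (monotoneOn_range_sdiff_of_forall_not_isShortDescent hS hfree)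
  linarith

lemma IsShortDescentMatching.insert {P : Finset (ℕ × ℕ)} (hP : IsShortDescentMatching n r f P)
    {a b : ℕ} (ha : a ∉ P.biUnion pairPoints) (hb : b ∉ P.biUnion pairPoints)
    (hab : IsShortDescent n r f (a, b)) : IsShortDescentMatching n r f (insert (a, b) P) := by
  refine ⟨forall_mem_insert _ _ _ |>.2 ⟨hab, hP.1⟩, ?_⟩
  rw [coe_insert]
  refine hP.2.insert fun q hq _ => disjoint_left.2 fun c hc hcq => ?_
  have hcS : c ∈ P.biUnion pairPoints := mem_biUnion.2 ⟨q, hq, hcq⟩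
  simp only [pairPoints, mem_insert, mem_singleton] at hc
  rcases hc with rfl | rfl
  exacts [ha hcS, hb hcS]

lemma exists_maximal_isShortDescentMatching :
    ∃ P, IsShortDescentMatching n r f P ∧
      ∀ a ∉ P.biUnion pairPoints, ∀ b ∉ P.biUnion pairPoints,
        ¬ IsShortDescent n r f (a, b) := by
  classical
  let M := (range n ×ˢ range n).powerset.filter (IsShortDescentMatching n r f)
  have hM : ∀ {P}, P ∈ M ↔ IsShortDescentMatching n r f P := fun {P} => by
    refine mem_filter.trans ⟨And.right, fun hP => ⟨mem_powerset.2 fun p hp => ?_, hP⟩⟩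
    obtain ⟨h12, h2n, -⟩ := hP.1 p hp
    exact mem_product.2 ⟨mem_range.2 (h12.trans h2n), mem_range.2 h2n⟩
  obtain ⟨P, hPM, hmax⟩ := M.exists_max_image card ⟨∅, hM.2 ⟨by simp, by simp⟩⟩
  refine ⟨P, hM.1 hPM, fun a ha b hb hab => ?_⟩
  have habP : (a, b) ∉ P := fun h => ha (mem_biUnion.2 ⟨_, h, by simp [pairPoints]⟩)
  have := hmax _ (hM.2 ((hM.1 hPM).insert ha hb hab))
  rw [card_insert_of_notMem habP] at this
  omega

end

theorem stmt6_general (n : ℕ) (ε : ℝ) (f : ℕ → ℕ)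
    (hfar : ∀ g : ℕ → ℕ, (∀ x y, x ≤ y → y < n → g x ≤ g y) →
      ε * n ≤ ((Finset.range n).filter (fun x => f x ≠ g x)).card) :
    ∃ P : Finset (ℕ × ℕ), P.card = ⌊ε * n / 2⌋₊ ∧
      (∀ p ∈ P, p.1 < p.2 ∧ p.2 < n ∧ f p.2 < f p.1 ∧ ((p.2 : ℝ) - p.1) ≤ ε * n) ∧
      (∀ p ∈ P, ∀ q ∈ P, p ≠ q → ({p.1, p.2} : Set ℕ) ∩ {q.1, q.2} = ∅) := by
  obtain ⟨P, ⟨hshort, hdisj⟩, hfree⟩ :=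
    exists_maximal_isShortDescentMatching (n := n) (r := ε * n) (f := f)
  have hlt : ε * n < 2 * P.card + 1 :=
    calc ε * n < (P.biUnion pairPoints).card + 1 := FarFromMonotone.lt_card_add_one hfar hfree
      _ ≤ 2 * P.card + 1 := by
        exact_mod_cast Nat.add_le_add_right (card_biUnion_pairPoints_le P) 1
  have hcard : ⌊ε * n / 2⌋₊ ≤ P.card :=
    Nat.lt_succ_iff.1 <| (Nat.floor_lt' P.card.succ_ne_zero).2 (by push_cast; linarith)
  obtain ⟨Q, hQP, hQ⟩ := exists_subset_card_eq hcard
  refine ⟨Q, hQ, fun p hp => hshort p (hQP hp), fun p hp q hq hpq => ?_⟩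
  have := hdisj (hQP hp) (hQP hq) hpq
  rw [← Set.disjoint_iff_inter_eq_empty]
  simpa [pairPoints, ← disjoint_coe] using this

/-- If `f : [n] → ℕ` is `ε`-far from monotone and `t = ⌊εn/2⌋`, then there are
pairwise disjoint pairs `(x_1,y_1),…,(x_t,y_t)` with `x_i < y_i`,
`f x_i > f y_i` and `y_i − x_i ≤ εn`. -/
theorem stmt6 (n : ℕ) (ε : ℝ) (hε : 0 < ε) (f : ℕ → ℕ)
    (hfar : ∀ g : ℕ → ℕ, (∀ x y, x ≤ y → y < n → g x ≤ g y) →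
      ε * n ≤ ((Finset.range n).filter (fun x => f x ≠ g x)).card) :
    ∃ P : Finset (ℕ × ℕ), P.card = ⌊ε * n / 2⌋₊ ∧
      (∀ p ∈ P, p.1 < p.2 ∧ p.2 < n ∧ f p.2 < f p.1 ∧ ((p.2 : ℝ) - p.1) ≤ ε * n) ∧
      (∀ p ∈ P, ∀ q ∈ P, p ≠ q → ({p.1, p.2} : Set ℕ) ∩ {q.1, q.2} = ∅) :=
  stmt6_general n ε f hfar
end

section
/- For any integers x and y with x + 2 ≤ y and y − x ≤ εn (where εn ≥ 1), there exists an integer i with 0 ≤ i ≤ ⌈log₂(εn)⌉ such that there is exactly one multiple of 2^i strictly between x and y. -/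
lemma stmt7_step (x y i w v : ℕ) (hw1 : x < w) (hw3 : 2 ^ i ∣ w)
    (hv2 : v < y) (hv3 : 2 ^ i ∣ v) (hlt : w < v) :
    ∃ u, x < u ∧ u < y ∧ 2 ^ (i+1) ∣ u := by
  obtain ⟨a, ha⟩ := hw3
  have hgap : 2 ^ i ≤ v - w := Nat.le_of_dvd (by omega) (Nat.dvd_sub hv3 ⟨a, ha⟩)
  rcases Nat.even_or_odd a with ⟨b, hb⟩ | ⟨c, hc⟩
  · exact ⟨w, hw1, by omega, ⟨b, by rw [ha, hb]; ring⟩⟩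
  · exact ⟨w + 2 ^ i, by omega, by omega, ⟨c + 1, by rw [ha, hc]; ring⟩⟩

/-- For integers `x + 2 ≤ y` with `y − x ≤ M` where `M ≥ 1`, there exists
`0 ≤ i ≤ ⌈log₂ M⌉` such that there is exactly one multiple of `2^i` strictly
between `x` and `y`. -/
theorem stmt7 (x y : ℕ) (M : ℝ) (hM : 1 ≤ M) (hxy : x + 2 ≤ y)
    (hd : (y : ℝ) - x ≤ M) :
    ∃ i : ℕ, i ≤ ⌈Real.logb 2 M⌉₊ ∧ ∃! w : ℕ, x < w ∧ w < y ∧ 2 ^ i ∣ w := by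
  classical
  set L := ⌈Real.logb 2 M⌉₊ with hLdef
  have hM0 : (0:ℝ) < M := lt_of_lt_of_le one_pos hM
  have h2L : M ≤ (2:ℝ) ^ L := by
    have h1 : Real.logb 2 M ≤ (L : ℝ) := Nat.le_ceil _
    calc M = (2:ℝ) ^ Real.logb 2 M := (Real.rpow_logb (by norm_num) (by norm_num) hM0).symm
      _ ≤ (2:ℝ) ^ ((L:ℕ):ℝ) := Real.rpow_le_rpow_of_exponent_le (by norm_num) h1
      _ = (2:ℝ) ^ L := Real.rpow_natCast 2 L
  have hyx : y - x ≤ 2 ^ L := by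
    have h2 : ((y - x : ℕ) : ℝ) ≤ ((2 ^ L : ℕ) : ℝ) := by
      rw [Nat.cast_sub (by omega)]
      push_cast
      exact le_trans hd h2L
    exact_mod_cast h2
  set Q : ℕ → Prop := fun i =>
    ∀ w v : ℕ, x < w → w < y → 2 ^ i ∣ w → x < v → v < y → 2 ^ i ∣ v → w = v with hQdef
  have key : ∀ w v : ℕ, x < w → w < y → 2 ^ L ∣ w → v < y → 2 ^ L ∣ v →
      w < v → False := by
    intro w v hw1 hw2 hw3 hv2 hv3 hlt
    have := Nat.le_of_dvd (by omega) (Nat.dvd_sub hv3 hw3)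
    omega
  have hQL : Q L := by
    intro w v hw1 hw2 hw3 hv1 hv2 hv3
    rcases lt_trichotomy w v with h | h | h
    · exact absurd (key w v hw1 hw2 hw3 hv2 hv3 h) not_false
    · exact h
    · exact absurd (key v w hv1 hv2 hv3 hw2 hw3 h) not_false
  have hex : ∃ i, Q i := ⟨L, hQL⟩
  set i := Nat.find hex with hidef
  have hiQ : Q i := Nat.find_spec hex
  have hiL : i ≤ L := Nat.find_min' hex hQL
  have hP : ∃ w, x < w ∧ w < y ∧ 2 ^ i ∣ w := by
    rcases Nat.eq_zero_or_pos i with h0 | hpos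
    · exact ⟨x + 1, by omega, by omega, by rw [h0]; exact one_dvd _⟩
    · have hk : ¬ Q (i - 1) := Nat.find_min hex (by omega)
      have hk' : ¬ ∀ w v : ℕ, x < w → w < y → 2 ^ (i-1) ∣ w → x < v → v < y →
          2 ^ (i-1) ∣ v → w = v := hk
      push_neg at hk'
      obtain ⟨w, v, hw1, hw2, hw3, hv1, hv2, hv3, hne⟩ := hk'
      have hi1 : i - 1 + 1 = i := by omega
      rcases lt_or_gt_of_ne hne with h | h
      · exact hi1 ▸ stmt7_step x y (i-1) w v hw1 hw3 hv2 hv3 h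
      · exact hi1 ▸ stmt7_step x y (i-1) v w hv1 hv3 hw2 hw3 h
  obtain ⟨w, hw1, hw2, hw3⟩ := hP
  exact ⟨i, hiL, w, ⟨hw1, hw2, hw3⟩, fun v ⟨hv1, hv2, hv3⟩ => hiQ v w hv1 hv2 hv3 hw1 hw2 hw3⟩
end

section
/- Let f be sampled from μ_k (the recursive distribution on monotone functions [2^k] → [m^k]). Equivalently, for each binary string s of length < k sample a_s uniformly and independently from {0,...,m-2}; then for each x ∈ [2^k], the i-th m-ary digit (most significant first) of f(x) equals a_s + b, where s is the length-i prefix of x and b is the i-th bit of x. The two definitions yield the same distribution. -/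
/-- Uniform distribution on `{0,…,m-2}` (degenerates to `pure 0` if `m ≤ 1`). -/
noncomputable def unifA (m : ℕ) : PMF ℕ :=
  if h : (Finset.range (m - 1)).Nonempty then PMF.uniformOfFinset _ h
  else PMF.pure 0

/-- The recursively defined distribution `μ_i` on functions `[2^i] → [m^i]`. -/
noncomputable def mu (m : ℕ) : ℕ → PMF (ℕ → ℕ)
  | 0 => PMF.pure fun _ => 0
  | i + 1 =>
      (mu m i).bind fun f0 => (mu m i).bind fun f1 => (unifA m).bind fun a =>
        PMF.pure fun x =>
          if x < 2 ^ i then a * m ^ i + f0 x else (a + 1) * m ^ i + f1 (x - 2 ^ i)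

/-- Index type for binary strings of length `< k`: a string of length `i < k`
is a pair `⟨i, p⟩` with `p < 2^i` its value as a binary number. -/
abbrev PrefixIdx (k : ℕ) := Σ i : Fin k, Fin (2 ^ (i : ℕ))

/-- Independent uniform samples `a_s ∈ {0,…,m-2}` for each binary string `s` of
length `< k` (degenerates if `m ≤ 1`). -/
noncomputable def aDist (m k : ℕ) : PMF (PrefixIdx k → ℕ) :=
  if h : (Fintype.piFinset fun _ : PrefixIdx k => Finset.range (m - 1)).Nonempty then
    PMF.uniformOfFinset _ h
  else PMF.pure fun _ => 0

/-- The digit-based definition: the `i`-th `m`-ary digit (digit 0 most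
significant) of `f x` is `a_s + b`, where `s` is the length-`i` prefix of the
`k`-bit string `x` and `b` is bit `i` of `x`. -/
def digitFun (m k : ℕ) (a : PrefixIdx k → ℕ) (x : ℕ) : ℕ :=
  ∑ i : Fin k,
    (a ⟨i, ⟨x / 2 ^ (k - (i : ℕ)) % 2 ^ (i : ℕ),
        Nat.mod_lt _ (Nat.two_pow_pos _)⟩⟩
      + (x.testBit (k - 1 - (i : ℕ))).toNat) * m ^ (k - 1 - (i : ℕ))

open PMF Finset

lemma uniform_map {α β : Type*} [DecidableEq β] (s : Finset α) (hs : s.Nonempty) (f : α → β)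
    (hf : Set.InjOn f s) :
    (PMF.uniformOfFinset s hs).map f =
      PMF.uniformOfFinset (s.image f) (hs.image f) := by
  ext b
  rw [PMF.map_apply, PMF.uniformOfFinset_apply]
  by_cases hb : b ∈ s.image f
  · obtain ⟨a0, ha0, rfl⟩ := Finset.mem_image.mp hb
    rw [if_pos hb, tsum_eq_single a0]
    · simp [PMF.uniformOfFinset_apply, ha0, Finset.card_image_of_injOn hf]
    · intro a ha
      by_cases h1 : f a0 = f a
      · have : a ∉ s := fun hmem => ha (hf hmem ha0 h1.symm)
        simp [PMF.uniformOfFinset_apply, this]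
      · simp [h1]
  · rw [if_neg hb]
    refine ENNReal.tsum_eq_zero.mpr fun a => ?_
    by_cases h1 : b = f a
    · have : a ∉ s := fun hmem => hb (Finset.mem_image.mpr ⟨a, hmem, h1.symm⟩)
      simp [PMF.uniformOfFinset_apply, this]
    · simp [h1]

lemma bind_pure_pair {α β γ : Type*} (p : PMF α) (q : PMF β) (C : α → β → γ) :
    (p.bind fun a => q.bind fun b => PMF.pure (C a b)) =
      (p.bind fun a => q.bind fun b => PMF.pure (a, b)).map fun x => C x.1 x.2 := by
  simp only [PMF.map_bind, PMF.pure_map]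

lemma uniform_pair {α β : Type*} (s : Finset α) (t : Finset β) (hs : s.Nonempty)
    (ht : t.Nonempty) :
    ((PMF.uniformOfFinset s hs).bind fun a =>
        (PMF.uniformOfFinset t ht).bind fun b => PMF.pure (a, b)) =
      PMF.uniformOfFinset (s ×ˢ t) (hs.product ht) := by
  classical
  ext ⟨x, y⟩
  rw [PMF.bind_apply]
  have hinner : ∀ a : α,
      (PMF.uniformOfFinset s hs) a *
        ((PMF.uniformOfFinset t ht).bind fun b => PMF.pure (a, b)) (x, y)
      = (PMF.uniformOfFinset s hs) a * if a = x then (PMF.uniformOfFinset t ht) y else 0 := by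
    intro a
    congr 1
    rw [PMF.bind_apply, tsum_eq_single y]
    · by_cases h : a = x
      · subst h; simp [PMF.pure_apply]
      · rw [PMF.pure_apply, if_neg (fun hh : (x,y)=(a,y) => h (congrArg Prod.fst hh).symm),
          if_neg h, mul_zero]
    · intro b hb
      simp only [PMF.pure_apply, Prod.mk.injEq, mul_ite, mul_one, mul_zero]
      rw [if_neg]
      rintro ⟨-, rfl⟩; exact hb rfl
  rw [tsum_congr hinner, tsum_eq_single x]
  · rw [PMF.uniformOfFinset_apply, PMF.uniformOfFinset_apply, PMF.uniformOfFinset_apply,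
      if_pos rfl]
    by_cases hx : x ∈ s <;> by_cases hy : y ∈ t
    · rw [if_pos hx, if_pos hy, if_pos (Finset.mem_product.mpr ⟨hx, hy⟩), Finset.card_product,
        Nat.cast_mul, ENNReal.mul_inv]
      · exact Or.inl (by exact_mod_cast Finset.card_ne_zero_of_mem hx)
      · exact Or.inl (ENNReal.natCast_ne_top _)
    · simp [hx, hy, Finset.mem_product]
    · simp [hx, hy, Finset.mem_product]
    · simp [hx, hy, Finset.mem_product]
  · intro a ha; simp [ha]

lemma uniform_triple {α β γ δ : Type*} (s : Finset α) (t : Finset β) (u : Finset γ)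
    (hs : s.Nonempty) (ht : t.Nonempty) (hu : u.Nonempty) (C : α → β → γ → δ) :
    ((PMF.uniformOfFinset s hs).bind fun a => (PMF.uniformOfFinset t ht).bind fun b =>
        (PMF.uniformOfFinset u hu).bind fun c => PMF.pure (C a b c)) =
      (PMF.uniformOfFinset (s ×ˢ t ×ˢ u) (hs.product (ht.product hu))).map
        fun x => C x.1 x.2.1 x.2.2 := by
  have h1 : ∀ a, ((PMF.uniformOfFinset t ht).bind fun b =>
      (PMF.uniformOfFinset u hu).bind fun c => PMF.pure (C a b c)) =
      (PMF.uniformOfFinset (t ×ˢ u) (ht.product hu)).bind fun x => PMF.pure (C a x.1 x.2) := by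
    intro a
    rw [bind_pure_pair, uniform_pair, ← PMF.bind_pure_comp]
    rfl
  simp only [h1]
  rw [bind_pure_pair, uniform_pair]

def pidx {k : ℕ} (i : ℕ) (h : i < k) (v : ℕ) : PrefixIdx k :=
  ⟨⟨i, h⟩, ⟨v % 2 ^ i, Nat.mod_lt _ (Nat.two_pow_pos _)⟩⟩

lemma digitFun_pidx (m k : ℕ) (a : PrefixIdx k → ℕ) (x : ℕ) :
    digitFun m k a x =
      ∑ i : Fin k,
        (a (pidx (i : ℕ) i.2 (x / 2 ^ (k - (i : ℕ))))
          + (x.testBit (k - 1 - (i : ℕ))).toNat) * m ^ (k - 1 - (i : ℕ)) := rfl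

def combine (k : ℕ) (aL aR : PrefixIdx k → ℕ) (a : ℕ) (s : PrefixIdx (k + 1)) : ℕ :=
  if h : (s.1 : ℕ) = 0 then a
  else if hp : (s.2 : ℕ) < 2 ^ ((s.1 : ℕ) - 1) then
    aL ⟨⟨(s.1 : ℕ) - 1, by have := s.1.2; omega⟩, ⟨s.2, hp⟩⟩
  else
    aR ⟨⟨(s.1 : ℕ) - 1, by have := s.1.2; omega⟩,
      ⟨(s.2 : ℕ) - 2 ^ ((s.1 : ℕ) - 1), by
        show (s.2 : ℕ) - 2 ^ ((s.1 : ℕ) - 1) < 2 ^ ((s.1 : ℕ) - 1)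
        have h2 := s.2.2
        have hp2 : 2 ^ ((s.1 : ℕ)) = 2 * 2 ^ ((s.1 : ℕ) - 1) := by
          rw [← pow_succ']; congr 1; omega
        omega⟩⟩

lemma combine_pidx_zero (k : ℕ) (aL aR : PrefixIdx k → ℕ) (a : ℕ) (h : 0 < k + 1) (v : ℕ) :
    combine k aL aR a (pidx 0 h v) = a := by
  simp [combine, pidx]

lemma combine_pidx_succ_left (k : ℕ) (aL aR : PrefixIdx k → ℕ) (a : ℕ) {i : ℕ}
    (h1 : i + 1 < k + 1) (hik : i < k) (v : ℕ) (hv : v % 2 ^ (i + 1) < 2 ^ i) :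
    combine k aL aR a (pidx (i + 1) h1 v) = aL (pidx i hik v) := by
  rw [pidx, combine]
  dsimp only
  simp only [Nat.add_sub_cancel]
  rw [dif_neg (Nat.succ_ne_zero i), dif_pos hv]
  refine congrArg aL (congrArg (Sigma.mk (⟨i, hik⟩ : Fin k)) (Fin.ext ?_))
  show v % 2 ^ (i + 1) = v % 2 ^ i
  rw [← Nat.mod_mod_of_dvd v (pow_dvd_pow 2 (Nat.le_succ i)), Nat.mod_eq_of_lt hv]

lemma sub_lt_of_lt_two_mul {d e : ℕ} (h : d < 2 * e) : d - e < e := by omega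

lemma combine_pidx_succ_right (k : ℕ) (aL aR : PrefixIdx k → ℕ) (a : ℕ) {i : ℕ}
    (h1 : i + 1 < k + 1) (hik : i < k) (v : ℕ) (hv : ¬(v % 2 ^ (i + 1) < 2 ^ i)) :
    combine k aL aR a (pidx (i + 1) h1 v) = aR (pidx i hik (v % 2 ^ (i + 1) - 2 ^ i)) := by
  rw [pidx, combine]
  dsimp only
  simp only [Nat.add_sub_cancel]
  rw [dif_neg (Nat.succ_ne_zero i), dif_neg hv]
  refine congrArg aR (congrArg (Sigma.mk (⟨i, hik⟩ : Fin k)) (Fin.ext ?_))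
  show v % 2 ^ (i + 1) - 2 ^ i = (v % 2 ^ (i + 1) - 2 ^ i) % 2 ^ i
  have hlt : v % 2 ^ (i + 1) < 2 * 2 ^ i := by
    rw [← pow_succ']
    exact Nat.mod_lt _ (Nat.two_pow_pos _)
  rw [Nat.mod_eq_of_lt (sub_lt_of_lt_two_mul hlt)]

lemma digit_split (m k : ℕ) (aL aR : PrefixIdx k → ℕ) (a x : ℕ) (hx : x < 2 ^ (k + 1)) :
    digitFun m (k + 1) (combine k aL aR a) x =
      if x < 2 ^ k then a * m ^ k + digitFun m k aL x
      else (a + 1) * m ^ k + digitFun m k aR (x - 2 ^ k) := by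
  rw [digitFun_pidx, Fin.sum_univ_succ]
  simp only [Fin.val_zero, Fin.val_succ]
  have e1 : k + 1 - 1 - 0 = k := by omega
  have e2 : ∀ i : ℕ, k + 1 - 1 - (i + 1) = k - 1 - i := by intro i; omega
  have e3 : ∀ i : ℕ, k + 1 - (i + 1) = k - i := by intro i; omega
  rw [combine_pidx_zero, e1]
  by_cases hxk : x < 2 ^ k
  · rw [if_pos hxk, Nat.testBit_lt_two_pow hxk]
    rw [digitFun_pidx]
    simp only [Bool.toNat_false, add_zero]
    congr 1
    refine Finset.sum_congr rfl fun i _ => ?_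
    have hik : (i : ℕ) < k := i.2
    have hlt : x / 2 ^ (k - (i : ℕ)) < 2 ^ (i : ℕ) := by
      rw [Nat.div_lt_iff_lt_mul (Nat.two_pow_pos _), ← pow_add]
      have : k - (i : ℕ) + (i : ℕ) = k := by omega
      rw [add_comm, this]
      exact hxk
    have hmod : x / 2 ^ (k - (i : ℕ)) % 2 ^ ((i : ℕ) + 1) < 2 ^ (i : ℕ) := by
      rw [Nat.mod_eq_of_lt (lt_of_lt_of_le hlt (Nat.pow_le_pow_right (by norm_num) (Nat.le_succ _)))]
      exact hlt
    rw [e2, e3, combine_pidx_succ_left k aL aR a (by omega) hik _ hmod]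
  · rw [if_neg hxk]
    set y := x - 2 ^ k with hy
    have hxy : x = 2 ^ k + y := by omega
    have hyk : y < 2 ^ k := by
      have h2 : 2 ^ (k + 1) = 2 * 2 ^ k := by rw [pow_succ']
      omega
    have hbit : x.testBit k = true := by
      rw [hxy, Nat.testBit_two_pow_add_eq, Nat.testBit_lt_two_pow hyk]
      rfl
    rw [hbit]
    rw [digitFun_pidx]
    simp only [Bool.toNat_true]
    congr 1
    refine Finset.sum_congr rfl fun i _ => ?_
    have hik : (i : ℕ) < k := i.2
    have hdvd : (2 : ℕ) ^ (k - (i : ℕ)) ∣ 2 ^ k := pow_dvd_pow 2 (by omega)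
    have hylt : y / 2 ^ (k - (i : ℕ)) < 2 ^ (i : ℕ) := by
      rw [Nat.div_lt_iff_lt_mul (Nat.two_pow_pos _), ← pow_add]
      have : k - (i : ℕ) + (i : ℕ) = k := by omega
      rw [add_comm, this]
      exact hyk
    have hdiv : x / 2 ^ (k - (i : ℕ)) = 2 ^ (i : ℕ) + y / 2 ^ (k - (i : ℕ)) := by
      rw [hxy]
      have hpk : (2 : ℕ) ^ k = 2 ^ (k - (i : ℕ)) * 2 ^ (i : ℕ) := by
        rw [← pow_add]
        congr 1
        omega
      rw [hpk, add_comm (2 ^ (k - (i : ℕ)) * 2 ^ (i : ℕ)) y,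
        Nat.add_mul_div_left _ _ (Nat.two_pow_pos _), add_comm]
    have hvlt : x / 2 ^ (k - (i : ℕ)) < 2 ^ ((i : ℕ) + 1) := by
      rw [hdiv, pow_succ', two_mul]
      exact Nat.add_lt_add_left hylt _
    have hmodv : x / 2 ^ (k - (i : ℕ)) % 2 ^ ((i : ℕ) + 1) = x / 2 ^ (k - (i : ℕ)) :=
      Nat.mod_eq_of_lt hvlt
    have hnot : ¬(x / 2 ^ (k - (i : ℕ)) % 2 ^ ((i : ℕ) + 1) < 2 ^ (i : ℕ)) := by
      rw [hmodv, hdiv]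
      exact Nat.not_lt.mpr (Nat.le_add_right _ _)
    rw [e2, e3, combine_pidx_succ_right k aL aR a (by omega) hik _ hnot]
    have harg : x / 2 ^ (k - (i : ℕ)) % 2 ^ ((i : ℕ) + 1) - 2 ^ (i : ℕ) = y / 2 ^ (k - (i : ℕ)) := by
      rw [hmodv, hdiv, Nat.add_sub_cancel_left]
    rw [harg]
    have hbit2 : x.testBit (k - 1 - (i : ℕ)) = y.testBit (k - 1 - (i : ℕ)) := by
      rw [hxy, Nat.testBit_two_pow_add_gt (by omega)]
    rw [hbit2]

lemma pidx_eq_mk {k i v : ℕ} (h : i < k) (hv : v < 2 ^ i) :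
    (pidx i h v : PrefixIdx k) = ⟨⟨i, h⟩, ⟨v, hv⟩⟩ :=
  congrArg (Sigma.mk (⟨i, h⟩ : Fin k)) (Fin.ext (Nat.mod_eq_of_lt hv))

lemma combine_injective (k : ℕ) :
    Function.Injective
      (fun t : ((PrefixIdx k → ℕ) × (PrefixIdx k → ℕ) × ℕ) => combine k t.1 t.2.1 t.2.2) := by
  rintro ⟨aL, aR, a⟩ ⟨bL, bR, b⟩ h
  simp only at h
  refine Prod.ext ?_ (Prod.ext ?_ ?_)
  · funext s
    rcases s with ⟨⟨iv, hik⟩, ⟨pv, hp⟩⟩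
    have hcond : pv % 2 ^ (iv + 1) < 2 ^ iv := by
      rw [Nat.mod_eq_of_lt (lt_of_lt_of_le hp (Nat.pow_le_pow_right (by norm_num) (Nat.le_succ _)))]
      exact hp
    have h2 := congrFun h (pidx (iv + 1) (Nat.succ_lt_succ hik) pv)
    rw [combine_pidx_succ_left k aL aR a _ hik pv hcond,
      combine_pidx_succ_left k bL bR b _ hik pv hcond, pidx_eq_mk hik hp] at h2
    exact h2
  · funext s
    rcases s with ⟨⟨iv, hik⟩, ⟨pv, hp⟩⟩
    have hp' : pv < 2 ^ iv := hp
    have hlt : pv + 2 ^ iv < 2 ^ (iv + 1) := by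
      have : (2:ℕ) ^ (iv + 1) = 2 * 2 ^ iv := by rw [pow_succ']
      omega
    have hmod : (pv + 2 ^ iv) % 2 ^ (iv + 1) = pv + 2 ^ iv := Nat.mod_eq_of_lt hlt
    have hcond : ¬((pv + 2 ^ iv) % 2 ^ (iv + 1) < 2 ^ iv) := by
      rw [hmod]
      exact Nat.not_lt.mpr (Nat.le_add_left _ _)
    have h2 := congrFun h (pidx (iv + 1) (Nat.succ_lt_succ hik) (pv + 2 ^ iv))
    rw [combine_pidx_succ_right k aL aR a _ hik _ hcond,
      combine_pidx_succ_right k bL bR b _ hik _ hcond, hmod, Nat.add_sub_cancel,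
      pidx_eq_mk hik hp] at h2
    exact h2
  · have h2 := congrFun h (pidx 0 (Nat.succ_pos k) 0)
    rwa [combine_pidx_zero, combine_pidx_zero] at h2

lemma image_combine (m k : ℕ) :
    Finset.image
      (fun t : ((PrefixIdx k → ℕ) × (PrefixIdx k → ℕ) × ℕ) => combine k t.1 t.2.1 t.2.2)
      ((Fintype.piFinset fun _ : PrefixIdx k => Finset.range (m - 1)) ×ˢ
        ((Fintype.piFinset fun _ : PrefixIdx k => Finset.range (m - 1)) ×ˢ
          Finset.range (m - 1)))
    = Fintype.piFinset fun _ : PrefixIdx (k + 1) => Finset.range (m - 1) := by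
  ext g
  simp only [Finset.mem_image, Finset.mem_product, Fintype.mem_piFinset, Finset.mem_range]
  constructor
  · rintro ⟨⟨aL, aR, a⟩, ⟨hL, ⟨hR, ha⟩⟩, rfl⟩ s
    rcases s with ⟨⟨iv, hi⟩, ⟨pv, hp⟩⟩
    simp only
    rw [← pidx_eq_mk hi hp]
    match iv, hi, hp with
    | 0, hi, hp => rw [combine_pidx_zero]; exact ha
    | iv + 1, hi, hp =>
      have hik : iv < k := Nat.lt_of_succ_lt_succ hi
      by_cases hc : pv % 2 ^ (iv + 1) < 2 ^ iv
      · rw [combine_pidx_succ_left k aL aR a _ hik pv hc]; exact hL _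
      · rw [combine_pidx_succ_right k aL aR a _ hik pv hc]; exact hR _
  · intro hg
    refine ⟨⟨fun s => g (pidx ((s.1 : ℕ) + 1) (Nat.succ_lt_succ s.1.2) (s.2 : ℕ)),
      fun s => g (pidx ((s.1 : ℕ) + 1) (Nat.succ_lt_succ s.1.2) ((s.2 : ℕ) + 2 ^ (s.1 : ℕ))),
      g (pidx 0 (Nat.succ_pos k) 0)⟩, ⟨fun s => hg _, fun s => hg _, hg _⟩, ?_⟩
    funext s
    rcases s with ⟨⟨iv, hi⟩, ⟨pv, hp⟩⟩
    simp only
    rw [← pidx_eq_mk hi hp]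
    match iv, hi, hp with
    | 0, hi, hp =>
      rw [combine_pidx_zero]
      have hpv : pv = 0 := by
        have hp' : pv < 2 ^ 0 := hp
        omega
      subst hpv
      rfl
    | iv + 1, hi, hp =>
      have hik : iv < k := Nat.lt_of_succ_lt_succ hi
      have hmodp : pv % 2 ^ (iv + 1) = pv := Nat.mod_eq_of_lt hp
      by_cases hc : pv % 2 ^ (iv + 1) < 2 ^ iv
      · rw [combine_pidx_succ_left k _ _ _ _ hik pv hc]
        have hpv : pv < 2 ^ iv := by rwa [hmodp] at hc
        show g (pidx (iv + 1) _ (pv % 2 ^ iv)) = g (pidx (iv + 1) hi pv)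
        rw [Nat.mod_eq_of_lt hpv]
      · rw [combine_pidx_succ_right k _ _ _ _ hik pv hc]
        rw [hmodp] at hc ⊢
        have hsub : pv - 2 ^ iv < 2 ^ iv := by
          have : (2:ℕ) ^ (iv + 1) = 2 * 2 ^ iv := by rw [pow_succ']
          omega
        show g (pidx (iv + 1) _ ((pv - 2 ^ iv) % 2 ^ iv + 2 ^ iv)) = g (pidx (iv + 1) hi pv)
        rw [Nat.mod_eq_of_lt hsub, Nat.sub_add_cancel (Nat.not_lt.mp hc)]

lemma uniformOfFinset_congr {α : Type*} {s t : Finset α} (hst : s = t) (hs : s.Nonempty) :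
    PMF.uniformOfFinset s hs = PMF.uniformOfFinset t (hst ▸ hs) := by subst hst; rfl

/-- The recursive and the digit-based definitions of `μ = μ_k` yield the same
distribution on functions `[2^k] → [m^k]`. -/

theorem stmt10 (m k : ℕ) (hm : 2 ≤ m) :
    (mu m k).map (fun f x => if x < 2 ^ k then f x else 0) =
      (aDist m k).map (fun a x => if x < 2 ^ k then digitFun m k a x else 0) := by
  have hrange : (Finset.range (m - 1)).Nonempty := ⟨0, Finset.mem_range.mpr (by omega)⟩
  have hpiNe : ∀ k' : ℕ,
      (Fintype.piFinset fun _ : PrefixIdx k' => Finset.range (m - 1)).Nonempty :=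
    fun _ => Fintype.piFinset_nonempty.mpr fun _ => hrange
  induction k with
  | zero =>
    rw [show mu m 0 = PMF.pure (fun _ => 0) from rfl, PMF.pure_map]
    have hD : (fun (a : PrefixIdx 0 → ℕ) (x : ℕ) => if x < 2 ^ 0 then digitFun m 0 a x else 0)
        = Function.const _ (fun x : ℕ => if x < 2 ^ 0 then (fun _ : ℕ => 0) x else 0) := by
      funext a x
      simp [digitFun, Function.const]
    rw [hD, PMF.map_const]
  | succ k ih =>
    have hADist : ∀ k' : ℕ, aDist m k' = PMF.uniformOfFinset _ (hpiNe k') := by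
      intro k'; rw [aDist, dif_pos (hpiNe k')]
    have hunif : unifA m = PMF.uniformOfFinset _ hrange := by
      rw [unifA, dif_pos hrange]
    have hpow : (2:ℕ) ^ (k + 1) = 2 * 2 ^ k := by rw [pow_succ']
    -- the glue function only depends on truncations
    have hfun : ∀ (a : ℕ) (f0 f1 : ℕ → ℕ),
        (fun x => if x < 2 ^ (k+1) then
            (if x < 2 ^ k then a * m ^ k + f0 x else (a + 1) * m ^ k + f1 (x - 2 ^ k)) else 0)
        = (fun x => if x < 2 ^ (k+1) then
            (if x < 2 ^ k then a * m ^ k + (fun y => if y < 2 ^ k then f0 y else 0) x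
             else (a + 1) * m ^ k + (fun y => if y < 2 ^ k then f1 y else 0) (x - 2 ^ k))
            else 0) := by
      intro a f0 f1
      funext x
      by_cases h1 : x < 2 ^ (k+1)
      · by_cases h2 : x < 2 ^ k
        · simp [h1, h2]
        · have h3 : x - 2 ^ k < 2 ^ k := by omega
          simp [h1, h2, h3]
      · simp [h1]
    have hL1 : (mu m (k+1)).map (fun f x => if x < 2 ^ (k+1) then f x else 0)
        = ((mu m k).map (fun f x => if x < 2 ^ k then f x else 0)).bind fun g0 =>
            ((mu m k).map (fun f x => if x < 2 ^ k then f x else 0)).bind fun g1 =>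
              (unifA m).bind fun a =>
                PMF.pure (fun x => if x < 2 ^ (k+1) then
                  (if x < 2 ^ k then a * m ^ k + g0 x
                   else (a + 1) * m ^ k + g1 (x - 2 ^ k)) else 0) := by
      rw [show mu m (k+1) = (mu m k).bind fun f0 => (mu m k).bind fun f1 =>
        (unifA m).bind fun a => PMF.pure fun x =>
          if x < 2 ^ k then a * m ^ k + f0 x else (a + 1) * m ^ k + f1 (x - 2 ^ k) from rfl]
      simp only [PMF.map_bind, PMF.pure_map, PMF.bind_map, Function.comp_def]
      refine congrArg _ (funext fun f0 => congrArg _ (funext fun f1 => congrArg _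
        (funext fun a => congrArg PMF.pure ?_)))
      exact hfun a f0 f1
    rw [hL1, ih, hADist k, hADist (k+1), hunif]
    simp only [PMF.bind_map, Function.comp_def]
    rw [uniform_triple _ _ _ (hpiNe k) (hpiNe k) hrange
      (fun aL aR a => (fun x => if x < 2 ^ (k+1) then
        (if x < 2 ^ k then a * m ^ k + (fun y => if y < 2 ^ k then digitFun m k aL y else 0) x
         else (a + 1) * m ^ k +
            (fun y => if y < 2 ^ k then digitFun m k aR y else 0) (x - 2 ^ k)) else 0))]
    rw [show PMF.uniformOfFinset _ (hpiNe (k+1))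
        = (PMF.uniformOfFinset _ ((hpiNe k).product ((hpiNe k).product hrange))).map
            (fun t : ((PrefixIdx k → ℕ) × (PrefixIdx k → ℕ) × ℕ) =>
              combine k t.1 t.2.1 t.2.2) from by
      rw [uniform_map _ _ _ ((combine_injective k).injOn)]
      exact (uniformOfFinset_congr (image_combine m k) _).symm]
    rw [PMF.map_comp]
    refine congrArg (fun F => PMF.map F _) ?_
    funext t
    funext x
    show (if x < 2 ^ (k+1) then
        (if x < 2 ^ k then t.2.2 * m ^ k + (if x < 2 ^ k then digitFun m k t.1 x else 0)
         else (t.2.2 + 1) * m ^ k +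
            (if x - 2 ^ k < 2 ^ k then digitFun m k t.2.1 (x - 2 ^ k) else 0)) else 0)
      = (if x < 2 ^ (k+1) then digitFun m (k+1) (combine k t.1 t.2.1 t.2.2) x else 0)
    by_cases h1 : x < 2 ^ (k+1)
    · rw [if_pos h1, if_pos h1, digit_split m k t.1 t.2.1 t.2.2 x h1]
      by_cases h2 : x < 2 ^ k
      · simp [h2]
      · have h3 : x - 2 ^ k < 2 ^ k := by omega
        simp [h2, h3]
    · rw [if_neg h1, if_neg h1]
end

section
/- With f sampled from μ_k via independent uniform values a_s ∈ {0,...,m-2} (one per binary string s of length < k), for any fixed x ∈ [2^k], the probability that f(x) is 'bad'—i.e., some m-ary digit of f(x) equals 0 or m−1—is at most 2k/(m−1). -/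
open scoped ENNReal

/-- A value in `[m^k]` is bad if some of its `m`-ary digits equals `0` or `m-1`. -/
def BadVal (m k v : ℕ) : Prop :=
  ∃ i < k, v / m ^ (k - 1 - i) % m = 0 ∨ v / m ^ (k - 1 - i) % m = m - 1

/-!
On the support of `aDist m k` every `a s` is at most `m - 2`, so each summand `a s + b` of
`digitFun m k a x` is a genuine base-`m` digit, and the digit of `f x` at position `i` is
`a s + b` for the length-`i` prefix `s` of `x`. That digit is `0` or `m - 1` only when
`a s ∈ {0, m - 2}`, which for the single uniform coordinate `a s` has probability at most
`2 / (m - 1)`; a union bound over the `k` digits gives `2k / (m - 1)`.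
-/

open Finset

namespace Nat

lemma ofDigits_ofFn (m : ℕ) {k : ℕ} (d : Fin k → ℕ) :
    ofDigits m (List.ofFn d) = ∑ j : Fin k, d j * m ^ (j : ℕ) := by
  induction k with
  | zero => simp
  | succ k ih =>
    rw [List.ofFn_succ, ofDigits_cons, Fin.sum_univ_succ, ih, mul_sum]
    simp only [Fin.val_zero, pow_zero, mul_one, Fin.val_succ, pow_succ']
    congr 1
    exact sum_congr rfl fun j _ => by ring

lemma ofDigits_div_pow_mod {m : ℕ} (hm : 1 < m) {L : List ℕ} (hL : ∀ d ∈ L, d < m)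
    {t : ℕ} (ht : t < L.length) : ofDigits m L / m ^ t % m = L[t] := by
  rw [ofDigits_div_pow_eq_ofDigits_drop t (by omega) L hL, List.drop_eq_getElem_cons ht,
    ofDigits_cons, add_mul_mod_self_left, mod_eq_of_lt (hL _ (List.getElem_mem ht))]

lemma sum_mul_pow_div_pow_mod {m k : ℕ} (hm : 1 < m) {d : Fin k → ℕ} (hd : ∀ j, d j < m)
    (t : Fin k) : (∑ j : Fin k, d j * m ^ (j : ℕ)) / m ^ (t : ℕ) % m = d t := by
  rw [← ofDigits_ofFn, ofDigits_div_pow_mod hm (by simpa using hd) (by simp), List.getElem_ofFn]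

end Nat

namespace PMF

lemma toOuterMeasure_uniformOfFinset_piFinset_eval_eq_le {ι α : Type*} [Fintype ι]
    [DecidableEq ι] {S : Finset α} (hS : (Fintype.piFinset fun _ : ι => S).Nonempty)
    (c : ι) (v : α) :
    (uniformOfFinset _ hS).toOuterMeasure {a | a c = v} ≤ 1 / #S := by
  classical
  obtain ⟨N, hN⟩ : ∃ N, Fintype.card ι = N + 1 :=
    Nat.exists_eq_succ_of_ne_zero (Fintype.card_pos_iff.2 ⟨c⟩).ne'
  have hS0 : #S ≠ 0 := by
    obtain ⟨a, ha⟩ := hS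
    exact card_ne_zero_of_mem (Fintype.mem_piFinset.1 ha c)
  have hfilter : #{a ∈ Fintype.piFinset fun _ : ι => S | a c = v} ≤ #S ^ N := by
    convert (Fintype.card_filter_piFinset_const S c v).le.trans ?_
    split_ifs <;> simp [hN]
  rw [toOuterMeasure_uniformOfFinset_apply, Fintype.card_piFinset, prod_const, card_univ, hN]
  calc _ ≤ ((#S ^ N : ℕ) : ℝ≥0∞) / ((#S ^ (N + 1) : ℕ) : ℝ≥0∞) :=
        ENNReal.div_le_div_right (by exact_mod_cast hfilter) _
    _ = 1 / #S := by
        rw [pow_succ, Nat.cast_mul, ← ENNReal.mul_div_mul_left 1 _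
          (by exact_mod_cast pow_ne_zero N hS0) (ENNReal.natCast_ne_top _), mul_one]

lemma toOuterMeasure_uniformOfFinset_piFinset_eval_mem_le {ι α : Type*} [Fintype ι]
    [DecidableEq ι] {S : Finset α} (hS : (Fintype.piFinset fun _ : ι => S).Nonempty)
    (c : ι) (T : Finset α) :
    (uniformOfFinset _ hS).toOuterMeasure {a | a c ∈ T} ≤ #T / #S := by
  have hunion : {a : ι → α | a c ∈ T} = ⋃ v ∈ T, {a | a c = v} := by ext; simp
  calc (uniformOfFinset _ hS).toOuterMeasure {a | a c ∈ T}
      ≤ ∑ v ∈ T, (uniformOfFinset _ hS).toOuterMeasure {a | a c = v} :=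
        hunion ▸ MeasureTheory.measure_biUnion_finset_le T _
    _ ≤ ∑ _v ∈ T, 1 / (#S : ℝ≥0∞) :=
        sum_le_sum fun v _ => toOuterMeasure_uniformOfFinset_piFinset_eval_eq_le hS c v
    _ = #T / #S := by simp [div_eq_mul_inv]

end PMF

def prefixOf (k x : ℕ) (i : Fin k) : PrefixIdx k :=
  ⟨i, ⟨x / 2 ^ (k - (i : ℕ)) % 2 ^ (i : ℕ), Nat.mod_lt _ (Nat.two_pow_pos _)⟩⟩

lemma digitFun_eq_sum_rev (m k : ℕ) (a : PrefixIdx k → ℕ) (x : ℕ) :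
    digitFun m k a x
      = ∑ j : Fin k, (a (prefixOf k x j.rev) + (x.testBit j).toNat) * m ^ (j : ℕ) := by
  refine Fintype.sum_equiv Fin.revPerm _ _ fun i => ?_
  have hrev : k - 1 - (i : ℕ) = (i.rev : ℕ) := by rw [Fin.val_rev]; omega
  simp only [Fin.revPerm_apply, Fin.rev_rev, hrev]
  rfl

lemma digitFun_div_pow_mod {m k : ℕ} (hm : 1 < m) {a : PrefixIdx k → ℕ}
    (ha : ∀ s, a s + 1 < m) (x : ℕ) (i : Fin k) :
    digitFun m k a x / m ^ (k - 1 - (i : ℕ)) % m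
      = a (prefixOf k x i) + (x.testBit (k - 1 - (i : ℕ))).toNat := by
  have hrev : k - 1 - (i : ℕ) = (i.rev : ℕ) := by rw [Fin.val_rev]; omega
  rw [digitFun_eq_sum_rev, hrev, Nat.sum_mul_pow_div_pow_mod hm, Fin.rev_rev]
  intro j
  have := Bool.toNat_le (x.testBit j)
  have := ha (prefixOf k x j.rev)
  omega

lemma exists_prefixOf_mem_of_badVal {m k : ℕ} (hm : 2 ≤ m) {a : PrefixIdx k → ℕ}
    (ha : ∀ s, a s < m - 1) {x : ℕ} (hbad : BadVal m k (digitFun m k a x)) :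
    ∃ i, a (prefixOf k x i) ∈ ({0, m - 2} : Finset ℕ) := by
  obtain ⟨i, hi, hdigit⟩ := hbad
  have ha' : ∀ s, a s + 1 < m := fun s => by have := ha s; omega
  rw [digitFun_div_pow_mod (by omega) ha' x ⟨i, hi⟩] at hdigit
  dsimp only at hdigit
  refine ⟨⟨i, hi⟩, ?_⟩
  have := Bool.toNat_le (x.testBit (k - 1 - i))
  have := ha (prefixOf k x ⟨i, hi⟩)
  simp only [mem_insert, mem_singleton]
  omega

theorem stmt11_general (m k x : ℕ) (hm : 2 ≤ m) :
    (aDist m k).toOuterMeasure {a | BadVal m k (digitFun m k a x)} ≤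
      (2 * k : ℝ≥0∞) / ((m : ℝ≥0∞) - 1) := by
  have hS : (Fintype.piFinset fun _ : PrefixIdx k => range (m - 1)).Nonempty :=
    ⟨fun _ => 0, Fintype.mem_piFinset.2 fun _ => mem_range.2 (by omega)⟩
  rw [aDist, dif_pos hS]
  calc _ ≤ (PMF.uniformOfFinset _ hS).toOuterMeasure
        (⋃ i, {a | a (prefixOf k x i) ∈ ({0, m - 2} : Finset ℕ)}) := by
        refine PMF.toOuterMeasure_mono _ fun a ⟨hbad, ha⟩ => Set.mem_iUnion.2 ?_
        rw [PMF.support_uniformOfFinset, mem_coe, Fintype.mem_piFinset] at ha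
        exact exists_prefixOf_mem_of_badVal hm (fun s => mem_range.1 (ha s)) hbad
    _ ≤ ∑ i, (PMF.uniformOfFinset _ hS).toOuterMeasure
        {a | a (prefixOf k x i) ∈ ({0, m - 2} : Finset ℕ)} :=
        MeasureTheory.measure_iUnion_fintype_le _ _
    _ ≤ ∑ _i : Fin k, 2 / ((m : ℝ≥0∞) - 1) := by
        refine sum_le_sum fun i _ =>
          (PMF.toOuterMeasure_uniformOfFinset_piFinset_eval_mem_le hS _ _).trans ?_
        rw [card_range, ENNReal.natCast_sub, Nat.cast_one]
        gcongr
        exact_mod_cast card_insert_le _ _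
    _ = (2 * k : ℝ≥0∞) / ((m : ℝ≥0∞) - 1) := by
        simp only [sum_const, card_univ, Fintype.card_fin, nsmul_eq_mul, div_eq_mul_inv]
        ring

/-- For `f ~ μ` (digit-based definition) and any fixed `x ∈ [2^k]`, the
probability that `f x` is bad is at most `2k/(m-1)`. -/
theorem stmt11 (m k x : ℕ) (hm : 2 ≤ m) (hx : x < 2 ^ k) :
    (aDist m k).toOuterMeasure {a | BadVal m k (digitFun m k a x)} ≤
      (2 * k : ℝ≥0∞) / ((m : ℝ≥0∞) - 1) :=
  stmt11_general m k x hm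
end

section
/- Let μ be the distribution on functions f : [2^k] → [m^k] defined by digits a_s + b (a_s uniform on {0,...,m-2} independently over prefixes s), and for j ∈ [k] let ν^j be the distribution of g(x) = f(x XOR 2^(k-1-j)) for f ~ μ. If α is a good assignment (a partial function α : S → [m^k], S ⊆ [2^k], all values of α having no m-ary digit equal to 0 or m−1) and α does not cut index j, then Pr_{f~μ}[f agrees with α on S] = Pr_{g~ν^j}[g agrees with α on S]. -/
/-- A value in `[m^k]` is good if none of its `m`-ary digits is `0` or `m-1`. -/
def GoodVal (m k v : ℕ) : Prop :=
  ∀ i < k, v / m ^ (k - 1 - i) % m ≠ 0 ∧ v / m ^ (k - 1 - i) % m ≠ m - 1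

/-- `S` cuts index `j` if there are `x < y` in `S` agreeing on bits `0,…,j-1`
and differing in bit `j` (bit `i` of `x` is `x.testBit (k-1-i)`). -/
def Cuts (k : ℕ) (S : Finset ℕ) (j : ℕ) : Prop :=
  ∃ x ∈ S, ∃ y ∈ S, x < y ∧
    (∀ i < j, x.testBit (k - 1 - i) = y.testBit (k - 1 - i)) ∧
    x.testBit (k - 1 - j) ≠ y.testBit (k - 1 - j)

/-!
Every digit `a_s + b` lies in `[0, m)`, so agreement with `α` on `S` is a conjunction of
constraints each involving a single coordinate `a_s`, and the number of agreeing `a` is a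
product over prefixes `s` of the number of admissible values of `a_s`. Flipping bit `j` of
`x` leaves its prefixes of length `< j` alone and flips bit `j` of its longer prefixes, which
permutes the corresponding factors; at length `j` it only changes the bit `b` added to `a_s`.
As `α` does not cut `j`, all points of `S` below a prefix `s` of length `j` have the same bit
`j`, so the constraint on `a_s` reads `a_s + b = d` for the `j`-th digits `d` of their values.
Goodness puts `d` in `[1, m - 2]`, so for either value of `b` there is exactly one admissible
`a_s < m - 1` if these digits agree, and none otherwise.
-/
open Finset

lemma sum_mul_pow_rev_eq_iff {m k v : ℕ} {c : Fin k → ℕ} (hc : ∀ i, c i < m) (hv : v < m ^ k) :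
    ∑ i : Fin k, c i * m ^ (k - 1 - i) = v ↔ ∀ i : Fin k, c i = v / m ^ (k - 1 - i) % m := by
  let f : Fin k → Fin m := fun i => ⟨c i.rev, hc _⟩
  have hsum : ∑ i : Fin k, c i * m ^ (k - 1 - i) = finFunctionFinEquiv f := by
    rw [finFunctionFinEquiv_apply]
    refine Fintype.sum_equiv Fin.revPerm _ _ fun i => ?_
    simp only [Fin.revPerm_apply, f, Fin.rev_rev, Fin.val_rev]
    congr 2; omega
  rw [hsum, show v = (⟨v, hv⟩ : Fin (m ^ k)).val from rfl, Fin.val_inj, ← Equiv.eq_symm_apply,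
    funext_iff, Fin.revPerm.forall_congr_left]
  simp only [Fin.ext_iff, Fin.revPerm_symm, Fin.revPerm_apply, Fin.rev_rev, f,
    finFunctionFinEquiv_symm_apply_val, Fin.val_rev, Nat.sub_sub, Nat.add_comm 1]

lemma card_filter_forall_add_eq_of_le_one {ι : Type*} (T : Finset ι) (p : ι → Prop)
    [DecidablePred p] {c c' d : ι → ℕ} {n : ℕ} (hc : ∀ x, c x ≤ 1) (hc' : ∀ x, c' x ≤ 1)
    (hc_const : ∀ x ∈ T, p x → ∀ y ∈ T, p y → c x = c y)
    (hc'_const : ∀ x ∈ T, p x → ∀ y ∈ T, p y → c' x = c' y)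
    (hd : ∀ x ∈ T, p x → 1 ≤ d x ∧ d x < n) :
    #{v ∈ range n | ∀ x ∈ T, p x → v + c x = d x}
      = #{v ∈ range n | ∀ x ∈ T, p x → v + c' x = d x} := by
  by_cases hT : ∃ x₀ ∈ T, p x₀
  · obtain ⟨x₀, hx₀, hpx₀⟩ := hT
    have hd₀ := hd x₀ hx₀ hpx₀
    have key (c : ι → ℕ) (hc₀ : c x₀ ≤ 1) (hc : ∀ x ∈ T, p x → c x = c x₀) :
        #{v ∈ range n | ∀ x ∈ T, p x → v + c x = d x}
          = if ∀ x ∈ T, p x → d x = d x₀ then 1 else 0 := by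
      split_ifs with hconst
      · rw [card_eq_one]
        refine ⟨d x₀ - c x₀, ext fun v => ?_⟩
        simp only [mem_filter, mem_range, mem_singleton]
        constructor
        · rintro ⟨-, hv⟩; have := hv x₀ hx₀ hpx₀; omega
        · rintro rfl
          refine ⟨by omega, fun x hx hpx => ?_⟩
          have := hconst x hx hpx; have := hc x hx hpx; omega
      · rw [card_eq_zero, filter_eq_empty_iff]
        refine fun v _ hv => hconst fun x hx hpx => ?_
        have := hv x hx hpx; have := hv x₀ hx₀ hpx₀; have := hc x hx hpx; omega
    rw [key c (hc x₀) fun x hx hpx => hc_const x hx hpx x₀ hx₀ hpx₀,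
      key c' (hc' x₀) fun x hx hpx => hc'_const x hx hpx x₀ hx₀ hpx₀]
  · push Not at hT
    congr 1; ext v; simp only [mem_filter]
    exact and_congr_right fun _ =>
      ⟨fun _ x hx hpx => absurd hpx (hT x hx), fun _ x hx hpx => absurd hpx (hT x hx)⟩

def prefixAt (k : ℕ) (i : Fin k) (x : ℕ) : PrefixIdx k :=
  ⟨i, ⟨x / 2 ^ (k - i) % 2 ^ (i : ℕ), Nat.mod_lt _ (Nat.two_pow_pos _)⟩⟩

lemma digitFun_eq_iff {m k v : ℕ} {a : PrefixIdx k → ℕ} (ha : ∀ q, a q < m - 1)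
    (hv : v < m ^ k) (x : ℕ) :
    digitFun m k a x = v ↔ ∀ i : Fin k,
      a (prefixAt k i x) + (x.testBit (k - 1 - i)).toNat = v / m ^ (k - 1 - i) % m := by
  have hdigit (i : Fin k) : a (prefixAt k i x) + (x.testBit (k - 1 - i)).toNat < m := by
    have := ha (prefixAt k i x); have := Bool.toNat_le (x.testBit (k - 1 - i)); omega
  exact sum_mul_pow_rev_eq_iff hdigit hv

def PrefixConstraint (m k : ℕ) (S : Finset ℕ) (α σ : ℕ → ℕ) (q : PrefixIdx k) (v : ℕ) : Prop :=
  ∀ x ∈ S, prefixAt k q.1 (σ x) = q →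
    v + ((σ x).testBit (k - 1 - q.1)).toNat = α x / m ^ (k - 1 - q.1) % m

instance (m k : ℕ) (S : Finset ℕ) (α σ : ℕ → ℕ) (q : PrefixIdx k) :
    DecidablePred (PrefixConstraint m k S α σ q) :=
  fun _ => by unfold PrefixConstraint; infer_instance

lemma forall_digitFun_eq_iff {m k : ℕ} {S : Finset ℕ} {α : ℕ → ℕ} (σ : ℕ → ℕ)
    {a : PrefixIdx k → ℕ} (ha : ∀ q, a q < m - 1) (hval : ∀ x ∈ S, α x < m ^ k) :
    (∀ x ∈ S, digitFun m k a (σ x) = α x) ↔ ∀ q, PrefixConstraint m k S α σ q (a q) := by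
  refine ⟨fun h q x hx hq => ?_,
    fun h x hx => (digitFun_eq_iff ha (hval x hx) _).2 fun i => h _ x hx rfl⟩
  obtain ⟨i, s⟩ := q
  rw [← hq]
  exact (digitFun_eq_iff ha (hval x hx) _).1 (h x hx) _

lemma card_filter_forall_digitFun_eq {m k : ℕ} {S : Finset ℕ} {α : ℕ → ℕ} (σ : ℕ → ℕ)
    (hval : ∀ x ∈ S, α x < m ^ k) :
    #{a ∈ Fintype.piFinset fun _ : PrefixIdx k => range (m - 1) |
        ∀ x ∈ S, digitFun m k a (σ x) = α x}
      = ∏ q, #{v ∈ range (m - 1) | PrefixConstraint m k S α σ q v} := by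
  rw [← Fintype.card_piFinset]
  congr 1
  ext a
  simp only [mem_filter, Fintype.mem_piFinset, mem_range]
  exact ⟨fun ⟨ha, h⟩ q => ⟨ha q, (forall_digitFun_eq_iff σ ha hval).1 h q⟩,
    fun h => ⟨fun q => (h q).1,
      (forall_digitFun_eq_iff σ (fun q => (h q).1) hval).2 fun q => (h q).2⟩⟩

-- Bit `j` of a prefix `s` of length `i > j` is `s.testBit (i - 1 - j)`.
def flipPrefix (k j : ℕ) (q : PrefixIdx k) : PrefixIdx k :=
  if h : j < q.1 then
    ⟨q.1, ⟨q.2 ^^^ 2 ^ ((q.1 : ℕ) - 1 - j),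
      Nat.xor_lt_two_pow q.2.isLt (Nat.pow_lt_pow_right one_lt_two (by omega))⟩⟩
  else q

lemma flipPrefix_mk_of_lt {k j : ℕ} {i : Fin k} (s : Fin (2 ^ (i : ℕ))) (h : j < i) :
    flipPrefix k j ⟨i, s⟩ = ⟨i, ⟨s ^^^ 2 ^ ((i : ℕ) - 1 - j),
      Nat.xor_lt_two_pow s.isLt (Nat.pow_lt_pow_right one_lt_two (by omega))⟩⟩ :=
  dif_pos h

lemma flipPrefix_mk_of_le {k j : ℕ} {i : Fin k} (s : Fin (2 ^ (i : ℕ))) (h : (i : ℕ) ≤ j) :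
    flipPrefix k j ⟨i, s⟩ = ⟨i, s⟩ :=
  dif_neg (not_lt.2 h)

lemma fst_flipPrefix (k j : ℕ) (q : PrefixIdx k) : (flipPrefix k j q).1 = q.1 := by
  unfold flipPrefix; split_ifs <;> rfl

lemma flipPrefix_involutive (k j : ℕ) : Function.Involutive (flipPrefix k j) := by
  rintro ⟨i, s⟩
  rcases lt_or_ge j i with h | h
  · rw [flipPrefix_mk_of_lt s h, flipPrefix_mk_of_lt _ h]
    simp only [xor_cancel_right, Fin.eta]
  · rw [flipPrefix_mk_of_le s h, flipPrefix_mk_of_le s h]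

lemma testBit_div_two_pow_mod_two_pow (x d w n : ℕ) :
    (x / 2 ^ d % 2 ^ w).testBit n = (decide (n < w) && x.testBit (d + n)) := by
  rw [Nat.testBit_mod_two_pow, Nat.testBit_div_two_pow, Nat.add_comm]

lemma prefixAt_xor_two_pow (k j : ℕ) (i : Fin k) (x : ℕ) :
    prefixAt k i (x ^^^ 2 ^ (k - 1 - j)) = flipPrefix k j (prefixAt k i x) := by
  have hi := i.isLt
  unfold prefixAt
  rcases lt_or_ge j i with h | h
  · rw [flipPrefix_mk_of_lt _ h]
    simp only [Sigma.mk.injEq, heq_eq_eq, Fin.mk.injEq, true_and]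
    refine Nat.eq_of_testBit_eq fun n => ?_
    simp only [Nat.testBit_xor, testBit_div_two_pow_mod_two_pow, Nat.testBit_two_pow]
    by_cases hn : n < i
    · simp only [hn, decide_true, Bool.true_and, Bool.bne_right_inj, decide_eq_decide]; omega
    · simp only [hn, decide_false, Bool.false_and, Bool.false_bne, false_eq_decide_iff]; omega
  · rw [flipPrefix_mk_of_le _ h]
    simp only [Sigma.mk.injEq, heq_eq_eq, Fin.mk.injEq, true_and]
    refine Nat.eq_of_testBit_eq fun n => ?_
    simp only [Nat.testBit_xor, testBit_div_two_pow_mod_two_pow, Nat.testBit_two_pow]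
    by_cases hn : n < i
    · have hne : k - 1 - j ≠ k - i + n := by omega
      simp [hn, hne]
    · simp [hn]

lemma flipPrefix_prefixAt_of_le {k j : ℕ} {i : Fin k} (h : (i : ℕ) ≤ j) (x : ℕ) :
    flipPrefix k j (prefixAt k i x) = prefixAt k i x :=
  flipPrefix_mk_of_le _ h

lemma testBit_eq_of_prefixAt_eq {k : ℕ} {i : Fin k} {x y : ℕ}
    (h : prefixAt k i x = prefixAt k i y) {l : ℕ} (hl : l < i) :
    x.testBit (k - 1 - l) = y.testBit (k - 1 - l) := by
  have hxy : x / 2 ^ (k - i) % 2 ^ (i : ℕ) = y / 2 ^ (k - i) % 2 ^ (i : ℕ) := by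
    simpa [prefixAt] using h
  have := congrArg (Nat.testBit · (i - 1 - l)) hxy
  simp only [testBit_div_two_pow_mod_two_pow, show k - i + (i - 1 - l) = k - 1 - l by omega,
    decide_eq_true (show (i : ℕ) - 1 - l < i by omega), Bool.true_and] at this
  exact this

lemma testBit_eq_of_not_cuts {k j : ℕ} {S : Finset ℕ} (hnocut : ¬ Cuts k S j) (hj : j < k)
    {x y : ℕ} (hx : x ∈ S) (hy : y ∈ S) (h : prefixAt k ⟨j, hj⟩ x = prefixAt k ⟨j, hj⟩ y) :
    x.testBit (k - 1 - j) = y.testBit (k - 1 - j) := by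
  by_contra hne
  have hagree (l : ℕ) (hl : l < j) := testBit_eq_of_prefixAt_eq h hl
  rcases lt_trichotomy x y with hlt | rfl | hgt
  · exact hnocut ⟨x, hx, y, hy, hlt, hagree, hne⟩
  · exact hne rfl
  · exact hnocut ⟨y, hy, x, hx, hgt, fun l hl => (hagree l hl).symm, Ne.symm hne⟩

lemma prefixConstraint_xor_flipPrefix {m k j : ℕ} {S : Finset ℕ} {α : ℕ → ℕ} (hj : j < k)
    {q : PrefixIdx k} (hq : (q.1 : ℕ) ≠ j) :
    PrefixConstraint m k S α (· ^^^ 2 ^ (k - 1 - j)) (flipPrefix k j q)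
      = PrefixConstraint m k S α id q := by
  have hbit : k - 1 - j ≠ k - 1 - q.1 := by have := q.1.isLt; omega
  ext v
  simp only [PrefixConstraint, fst_flipPrefix, prefixAt_xor_two_pow,
    (flipPrefix_involutive k j).injective.eq_iff, Nat.testBit_xor, Nat.testBit_two_pow_of_ne hbit,
    Bool.xor_false, id]

lemma card_prefixConstraint_xor_eq {m k j : ℕ} {S : Finset ℕ} {α : ℕ → ℕ} (hm : 2 ≤ m)
    (hj : j < k) (hgood : ∀ x ∈ S, GoodVal m k (α x)) (hnocut : ¬ Cuts k S j)
    (s : Fin (2 ^ j)) :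
    #{v ∈ range (m - 1) | PrefixConstraint m k S α (· ^^^ 2 ^ (k - 1 - j)) ⟨⟨j, hj⟩, s⟩ v}
      = #{v ∈ range (m - 1) | PrefixConstraint m k S α id ⟨⟨j, hj⟩, s⟩ v} := by
  simp only [PrefixConstraint, prefixAt_xor_two_pow,
    flipPrefix_prefixAt_of_le (i := ⟨j, hj⟩) le_rfl, id]
  refine card_filter_forall_add_eq_of_le_one S (fun x => prefixAt k ⟨j, hj⟩ x = ⟨⟨j, hj⟩, s⟩)
    (fun _ => Bool.toNat_le _) (fun _ => Bool.toNat_le _) ?_ ?_ fun x hx _ => ?_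
  · intro x hx hpx y hy hpy
    simp only [Nat.testBit_xor, Nat.testBit_two_pow_self,
      testBit_eq_of_not_cuts hnocut hj hx hy (hpx.trans hpy.symm)]
  · intro x hx hpx y hy hpy
    rw [testBit_eq_of_not_cuts hnocut hj hx hy (hpx.trans hpy.symm)]
  · obtain ⟨h0, h1⟩ := hgood x hx j hj
    have := Nat.mod_lt (α x / m ^ (k - 1 - j)) (by omega : 0 < m)
    omega

lemma card_prefixConstraint_xor_flipPrefix {m k j : ℕ} {S : Finset ℕ} {α : ℕ → ℕ} (hm : 2 ≤ m)
    (hj : j < k) (hgood : ∀ x ∈ S, GoodVal m k (α x)) (hnocut : ¬ Cuts k S j)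
    (q : PrefixIdx k) :
    #{v ∈ range (m - 1) | PrefixConstraint m k S α (· ^^^ 2 ^ (k - 1 - j)) (flipPrefix k j q) v}
      = #{v ∈ range (m - 1) | PrefixConstraint m k S α id q v} := by
  obtain ⟨⟨i, hi⟩, s⟩ := q
  obtain rfl | hij := eq_or_ne i j
  · rw [flipPrefix_mk_of_le s le_rfl]
    exact card_prefixConstraint_xor_eq hm hi hgood hnocut s
  · simp only [prefixConstraint_xor_flipPrefix (q := ⟨⟨i, hi⟩, s⟩) hj hij]

theorem stmt12_general (m k j : ℕ) (hm : 2 ≤ m) (hj : j < k)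
    (S : Finset ℕ) (α : ℕ → ℕ)
    (hval : ∀ x ∈ S, α x < m ^ k)
    (hgood : ∀ x ∈ S, GoodVal m k (α x))
    (hnocut : ¬ Cuts k S j) :
    ((aDist m k).map (digitFun m k)).toOuterMeasure {f | ∀ x ∈ S, f x = α x} =
      ((aDist m k).map (fun a x => digitFun m k a (x ^^^ 2 ^ (k - 1 - j)))).toOuterMeasure
        {g | ∀ x ∈ S, g x = α x} := by
  classical
  have hne : (Fintype.piFinset fun _ : PrefixIdx k => range (m - 1)).Nonempty :=
    Fintype.piFinset_nonempty.mpr fun _ => ⟨0, mem_range.mpr (by omega)⟩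
  rw [aDist, dif_pos hne, PMF.toOuterMeasure_map_apply, PMF.toOuterMeasure_map_apply,
    PMF.toOuterMeasure_uniformOfFinset_apply, PMF.toOuterMeasure_uniformOfFinset_apply]
  congr 2
  calc _ = ∏ q, #{v ∈ range (m - 1) | PrefixConstraint m k S α id q v} := by
        rw [← card_filter_forall_digitFun_eq id hval]
        exact congrArg card (filter_congr fun _ _ => Iff.rfl)
    _ = ∏ q, #{v ∈ range (m - 1) |
          PrefixConstraint m k S α (· ^^^ 2 ^ (k - 1 - j)) (flipPrefix k j q) v} :=
        prod_congr rfl fun q _ => (card_prefixConstraint_xor_flipPrefix hm hj hgood hnocut q).symm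
    _ = ∏ q, #{v ∈ range (m - 1) | PrefixConstraint m k S α (· ^^^ 2 ^ (k - 1 - j)) q v} :=
        Equiv.prod_comp (flipPrefix_involutive k j).toPerm
          fun q => #{v ∈ range (m - 1) | PrefixConstraint m k S α (· ^^^ 2 ^ (k - 1 - j)) q v}
    _ = _ := by
        rw [← card_filter_forall_digitFun_eq _ hval]
        exact congrArg card (filter_congr fun _ _ => Iff.rfl)

/-- If the good assignment `α : S → [m^k]` does not cut index `j`, then the
probability of agreeing with `α` is the same under `μ` and under `ν^j` (the
distribution of `x ↦ f (x XOR 2^(k-1-j))` for `f ~ μ`). -/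
theorem stmt12 (m k j : ℕ) (hm : 2 ≤ m) (hj : j < k)
    (S : Finset ℕ) (hS : ∀ x ∈ S, x < 2 ^ k) (α : ℕ → ℕ)
    (hval : ∀ x ∈ S, α x < m ^ k)
    (hgood : ∀ x ∈ S, GoodVal m k (α x))
    (hnocut : ¬ Cuts k S j) :
    ((aDist m k).map (digitFun m k)).toOuterMeasure {f | ∀ x ∈ S, f x = α x} =
      ((aDist m k).map (fun a x => digitFun m k a (x ^^^ 2 ^ (k - 1 - j)))).toOuterMeasure
        {g | ∀ x ∈ S, g x = α x} :=
  stmt12_general m k j hm hj S α hval hgood hnocut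
end

section
/- Let g : [2^k] → ℕ be (1/2)-far from monotone, and define F : [ℓ·2^k] → ℕ by F(t·2^k + x) = t·C + g(x) for one block index t ∈ [ℓ] (C ≥ max g + 1), and F(s·2^k + x) = s·C + f_s(x) with arbitrary monotone f_s : [2^k] → [C) on the other blocks. Then F is (1/(2ℓ))-far from monotone. -/
/-!
Restrict a monotone `h` to block `t` and lower it by `t·C`: the result is monotone on `[2^k]`,
so by farness it disagrees with `g` on at least `2^k / 2` points, and each of these is a point
of block `t` where `h` disagrees with `F`. Since `2^k / 2 = (ℓ·2^k) / (2ℓ)`, this suffices.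
-/

lemma monotone_below_shift_sub {n a m c : ℕ} {h : ℕ → ℕ}
    (hmono : ∀ x y, x ≤ y → y < n → h x ≤ h y) (hle : a + m ≤ n) :
    ∀ x y, x ≤ y → y < m → h (a + x) - c ≤ h (a + y) - c :=
  fun x y hxy hy => Nat.sub_le_sub_right (hmono _ _ (by omega) (by omega)) c

lemma card_filter_ne_shift_sub_le {n a m c : ℕ} {g F h : ℕ → ℕ} (hle : a + m ≤ n)
    (hF : ∀ x < m, F (a + x) = c + g x) :
    ((Finset.range m).filter (fun x => g x ≠ h (a + x) - c)).card ≤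
      ((Finset.range n).filter (fun x => F x ≠ h x)).card := by
  refine Finset.card_le_card_of_injOn (a + ·) (fun x hx => ?_) (fun x _ y _ hxy => by simpa using hxy)
  simp only [Finset.coe_filter, Finset.mem_range, Set.mem_ofPred_eq] at hx ⊢
  refine ⟨by omega, fun heq => hx.2 ?_⟩
  rw [← heq, hF x hx.1, Nat.add_sub_cancel_left]

lemma block_add_le_mul {t ℓ m : ℕ} (ht : t < ℓ) : t * m + m ≤ ℓ * m := by
  simpa [Nat.succ_mul] using Nat.mul_le_mul_right m (Nat.succ_le_of_lt ht)

theorem stmt17_general (k ℓ t C : ℕ) (ht : t < ℓ)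
    (g : ℕ → ℕ)
    (hgfar : ∀ h : ℕ → ℕ, (∀ x y, x ≤ y → y < 2 ^ k → h x ≤ h y) →
      (2 : ℝ) ^ k / 2 ≤ ((Finset.range (2 ^ k)).filter (fun x => g x ≠ h x)).card)
    (f : ℕ → ℕ → ℕ)
    (F : ℕ → ℕ)
    (hF : ∀ s < ℓ, ∀ x < 2 ^ k,
      F (s * 2 ^ k + x) = s * C + if s = t then g x else f s x) :
    ∀ h : ℕ → ℕ, (∀ x y, x ≤ y → y < ℓ * 2 ^ k → h x ≤ h y) →
      (ℓ * 2 ^ k : ℝ) / (2 * ℓ) ≤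
        ((Finset.range (ℓ * 2 ^ k)).filter (fun x => F x ≠ h x)).card := by
  intro h hmono
  have hblock := block_add_le_mul (m := 2 ^ k) ht
  have hfar := hgfar _ (monotone_below_shift_sub (c := t * C) hmono hblock)
  have hsub := card_filter_ne_shift_sub_le (h := h) hblock fun x hx => by
    simpa using hF t ht x hx
  have hℓ : (ℓ : ℝ) ≠ 0 := by exact_mod_cast (Nat.zero_lt_of_lt ht).ne'
  calc (ℓ * 2 ^ k : ℝ) / (2 * ℓ) = 2 ^ k / 2 := by field_simp
    _ ≤ _ := hfar
    _ ≤ _ := by exact_mod_cast hsub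

/-- Let `g : [2^k] → ℕ` be `1/2`-far from monotone and define
`F : [ℓ·2^k] → ℕ` blockwise by `F (s·2^k + x) = s·C + g x` on block `s = t`
and `F (s·2^k + x) = s·C + f_s x` with monotone `f_s : [2^k] → [C)` on the
other blocks (where `C > max g`).  Then `F` is `1/(2ℓ)`-far from monotone:
every monotone function on `[ℓ·2^k]` differs from `F` on at least
`(ℓ·2^k)/(2ℓ)` points. -/
theorem stmt17 (k ℓ t C : ℕ) (hℓ : 1 ≤ ℓ) (ht : t < ℓ)
    (g : ℕ → ℕ) (hgC : ∀ x < 2 ^ k, g x < C)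
    (hgfar : ∀ h : ℕ → ℕ, (∀ x y, x ≤ y → y < 2 ^ k → h x ≤ h y) →
      (2 : ℝ) ^ k / 2 ≤ ((Finset.range (2 ^ k)).filter (fun x => g x ≠ h x)).card)
    (f : ℕ → ℕ → ℕ)
    (hf : ∀ s < ℓ, (∀ x y, x ≤ y → y < 2 ^ k → f s x ≤ f s y) ∧
      ∀ x < 2 ^ k, f s x < C)
    (F : ℕ → ℕ)
    (hF : ∀ s < ℓ, ∀ x < 2 ^ k,
      F (s * 2 ^ k + x) = s * C + if s = t then g x else f s x) :
    ∀ h : ℕ → ℕ, (∀ x y, x ≤ y → y < ℓ * 2 ^ k → h x ≤ h y) →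
      (ℓ * 2 ^ k : ℝ) / (2 * ℓ) ≤
        ((Finset.range (ℓ * 2 ^ k)).filter (fun x => F x ≠ h x)).card :=
  stmt17_general k ℓ t C ht g hgfar f F hF
end

section
/- If F : [2^(db)] → ℕ is a function such that there exist 2^(db−1) pairwise disjoint pairs {x, y} where x and y differ in exactly one bit (of the db-bit representation), x < y, and F(x) > F(y), then the function F viewed as a function on the hypergrid [2^b]^d (via splitting the db bits into d groups of b bits, each group read as a coordinate) is 1/2-far from monotone with respect to the coordinatewise partial order on [2^b]^d. -/
/-!
Flipping a single bit of `x` from `0` to `1` raises exactly one grid coordinate, so each pair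
`x < y` of the hypothesis is a violated comparable pair of the hypergrid. A monotone `h` must
therefore disagree with `F` at an endpoint of every pair, and since the pairs are disjoint these
endpoints are distinct: `F` and `h` differ on at least `2^(db-1)` points.
-/

/-- The `i`-th coordinate (most significant group first) of `x ∈ [2^(db)]`
viewed as a point of the hypergrid `[2^b]^d`, by splitting the `db` bits of
`x` into `d` groups of `b` bits. -/
def toGrid (d b x : ℕ) (i : Fin d) : ℕ := x / 2 ^ (b * (d - 1 - (i : ℕ))) % 2 ^ b

theorem Nat.testBit_imp_of_xor_eq_two_pow {x y j : ℕ} (hlt : x < y) (hxor : x ^^^ y = 2 ^ j)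
    (m : ℕ) (hm : x.testBit m) : y.testBit m := by
  have hbit (i : ℕ) : (x.testBit i ^^ y.testBit i) = decide (j = i) := by
    rw [← Nat.testBit_xor, hxor, Nat.testBit_two_pow]
  have heq (i : ℕ) (hi : j ≠ i) : x.testBit i = y.testBit i := by
    simpa [hi] using hbit i
  by_cases hmj : j = m
  · subst hmj
    by_contra hy
    rw [Bool.not_eq_true] at hy
    have hyx : y < x := Nat.lt_of_testBit j hy hm fun i hi => (heq i hi.ne).symm
    exact hyx.not_gt hlt
  · rwa [← heq m hmj]

theorem toGrid_le_toGrid_of_testBit_imp {x y : ℕ} (h : ∀ m, x.testBit m → y.testBit m)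
    (d b : ℕ) (i : Fin d) : toGrid d b x i ≤ toGrid d b y i :=
  Nat.le_of_testBit fun m hm => by
    simp only [toGrid, Nat.testBit_mod_two_pow, Nat.testBit_div_two_pow, Bool.and_eq_true] at hm ⊢
    exact ⟨hm.1, h _ hm.2⟩

theorem Finset.card_le_card_of_disjoint_pairs {α : Type*} (P : Finset (α × α)) (S : Finset α)
    (hdisj : ∀ p ∈ P, ∀ q ∈ P, p ≠ q → ({p.1, p.2} : Set α) ∩ {q.1, q.2} = ∅)
    (hS : ∀ p ∈ P, p.1 ∈ S ∨ p.2 ∈ S) : P.card ≤ S.card := by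
  classical
  let w (p : α × α) : α := if p.1 ∈ S then p.1 else p.2
  have hw (p : α × α) : w p ∈ ({p.1, p.2} : Set α) := by
    unfold w; split_ifs <;> simp
  refine Finset.card_le_card_of_injOn w (fun p hp => ?_) fun p hp q hq hpq => ?_
  · unfold w; split_ifs with h
    · exact h
    · exact (hS p hp).resolve_left h
  · by_contra hne
    have hmem : w p ∈ ({p.1, p.2} : Set α) ∩ {q.1, q.2} := ⟨hw p, hpq ▸ hw q⟩
    rwa [hdisj p hp q hq hne] at hmem

theorem stmt18_general (d b : ℕ) (F : ℕ → ℕ)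
    (P : Finset (ℕ × ℕ)) (hcard : P.card = 2 ^ (d * b - 1))
    (hP : ∀ p ∈ P, p.1 < p.2 ∧ p.2 < 2 ^ (d * b) ∧
      (∃ j < d * b, p.1 ^^^ p.2 = 2 ^ j) ∧ F p.2 < F p.1)
    (hdisj : ∀ p ∈ P, ∀ q ∈ P, p ≠ q → ({p.1, p.2} : Set ℕ) ∩ {q.1, q.2} = ∅) :
    ∀ h : ℕ → ℕ,
      (∀ x y, x < 2 ^ (d * b) → y < 2 ^ (d * b) →
        (∀ i : Fin d, toGrid d b x i ≤ toGrid d b y i) → h x ≤ h y) →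
      2 ^ (d * b - 1) ≤
        ((Finset.range (2 ^ (d * b))).filter (fun x => F x ≠ h x)).card := by
  intro h hmono
  rw [← hcard]
  refine Finset.card_le_card_of_disjoint_pairs P _ hdisj fun p hp => ?_
  obtain ⟨hlt, hlt', ⟨j, -, hxor⟩, hF⟩ := hP p hp
  have hh : h p.1 ≤ h p.2 := hmono _ _ (hlt.trans hlt') hlt'
    (toGrid_le_toGrid_of_testBit_imp (Nat.testBit_imp_of_xor_eq_two_pow hlt hxor) d b)
  simp only [Finset.mem_filter, Finset.mem_range]
  omega

/-- If `F : [2^(db)] → ℕ` admits `2^(db−1)` pairwise disjoint pairs `{x,y}`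
with `x < y` differing in exactly one bit and `F x > F y`, then `F`, viewed on
the hypergrid `[2^b]^d`, is `1/2`-far from monotone with respect to the
coordinatewise partial order. -/
theorem stmt18 (d b : ℕ) (hd : 0 < d) (hb : 0 < b) (F : ℕ → ℕ)
    (P : Finset (ℕ × ℕ)) (hcard : P.card = 2 ^ (d * b - 1))
    (hP : ∀ p ∈ P, p.1 < p.2 ∧ p.2 < 2 ^ (d * b) ∧
      (∃ j < d * b, p.1 ^^^ p.2 = 2 ^ j) ∧ F p.2 < F p.1)
    (hdisj : ∀ p ∈ P, ∀ q ∈ P, p ≠ q → ({p.1, p.2} : Set ℕ) ∩ {q.1, q.2} = ∅) :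
    ∀ h : ℕ → ℕ,
      (∀ x y, x < 2 ^ (d * b) → y < 2 ^ (d * b) →
        (∀ i : Fin d, toGrid d b x i ≤ toGrid d b y i) → h x ≤ h y) →
      2 ^ (d * b - 1) ≤
        ((Finset.range (2 ^ (d * b))).filter (fun x => F x ≠ h x)).card :=
  stmt18_general d b F P hcard hP hdisj
end
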